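/- If u and v are rational unit vectors of the same colour (both red, both white, or both black), then ⟪u, v⟫ ≠ 0; consequently the red/white/black colouring is a proper 3-colouring of the subgraph of G induced by the rational unit vectors. -/

import Mathlib

/-! Squares are `0` or `1` mod `4` and odd squares are `1` mod `4`, so an integer point `(a, b, c)`
with `a² + b² + c² = d²` has at most one odd coordinate. If two such points have the same odd
coordinate, their dot product is odd (one odd product, the other two even), hence nonzero.
Every rational unit vector has such a representation with an odd coordinate: take a common
denominator and halve numerators and denominator while all numerators are even. -/

open scoped RealInnerProductSpace

theorem sq_add_sq_add_sq_ne_sq_of_odd {x y : ℤ} (hx : Odd x) (hy : Odd y) (z w : ℤ) :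
    x ^ 2 + y ^ 2 + z ^ 2 ≠ w ^ 2 := by
  have sq_emod_four (n : ℤ) : n ^ 2 % 4 = 0 ∨ n ^ 2 % 4 = 1 := by
    rcases Int.even_or_odd n with ⟨k, rfl⟩ | hn
    · left; ring_nf; omega
    · exact .inr (Int.sq_mod_four_eq_one_of_odd hn)
  have := Int.sq_mod_four_eq_one_of_odd hx
  have := Int.sq_mod_four_eq_one_of_odd hy
  have := sq_emod_four z
  have := sq_emod_four w
  omega

theorem even_of_sum_sq_eq_sq_of_odd {m : Fin 3 → ℤ} {d : ℤ} (h : ∑ k, m k ^ 2 = d ^ 2)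
    {i j : Fin 3} (hi : Odd (m i)) (hji : j ≠ i) : Even (m j) := by
  rw [← Int.not_odd_iff_even]
  intro hj
  rw [Fin.sum_univ_three] at h
  fin_cases i <;> fin_cases j <;>
    simp only [Fin.zero_eta, Fin.mk_one, Fin.reduceFinMk, Fin.isValue, ne_eq, Fin.reduceEq,
      not_true_eq_false, not_false_eq_true, one_ne_zero, zero_ne_one] at hji hi hj
  · exact sq_add_sq_add_sq_ne_sq_of_odd hi hj (m 2) d (by linarith)
  · exact sq_add_sq_add_sq_ne_sq_of_odd hi hj (m 1) d (by linarith)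
  · exact sq_add_sq_add_sq_ne_sq_of_odd hi hj (m 2) d (by linarith)
  · exact sq_add_sq_add_sq_ne_sq_of_odd hi hj (m 0) d (by linarith)
  · exact sq_add_sq_add_sq_ne_sq_of_odd hi hj (m 1) d (by linarith)
  · exact sq_add_sq_add_sq_ne_sq_of_odd hi hj (m 0) d (by linarith)

theorem odd_sum_mul_of_odd {ι : Type*} [Fintype ι] [DecidableEq ι] {m n : ι → ℤ} {i : ι}
    (hmi : Odd (m i)) (hni : Odd (n i)) (hm : ∀ j ≠ i, Even (m j)) : Odd (∑ j, m j * n j) := by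
  rw [← Finset.add_sum_erase _ _ (Finset.mem_univ i)]
  refine (hmi.mul hni).add_even (Finset.even_sum _ fun j hj => ?_)
  exact (hm j (Finset.ne_of_mem_erase hj)).mul_right _

section EuclideanSpace

variable {ι : Type*} [Fintype ι]

theorem inner_eq_sum_mul_div {x y : EuclideanSpace ℝ ι} {d e : ℤ} {m n : ι → ℤ}
    (hxm : ∀ i, x i = m i / d) (hyn : ∀ i, y i = n i / e) :
    ⟪x, y⟫ = ((∑ i, m i * n i : ℤ) : ℝ) / (d * e) := by
  simp only [PiLp.inner_apply, RCLike.inner_apply, conj_trivial, hxm, hyn, Int.cast_sum,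
    Int.cast_mul, Finset.sum_div]
  congr 1 with i
  ring

theorem sum_sq_eq_sq_of_norm_eq_one {x : EuclideanSpace ℝ ι} {d : ℤ} {m : ι → ℤ} (hx : ‖x‖ = 1)
    (hd : d ≠ 0) (hxm : ∀ i, x i = m i / d) : ∑ i, m i ^ 2 = d ^ 2 := by
  have h := inner_eq_sum_mul_div hxm hxm
  rw [real_inner_self_eq_norm_sq, hx, eq_div_iff (by positivity)] at h
  simp only [one_pow, one_mul, ← sq] at h
  exact_mod_cast h.symm

theorem exists_common_denom {x : ι → ℝ} (hq : ∀ i, ∃ q : ℚ, x i = q) :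
    ∃ (d : ℕ) (m : ι → ℤ), 0 < d ∧ ∀ i, x i = m i / d := by
  choose q hq using hq
  have hdvd (i : ι) : (q i).den ∣ ∏ j, (q j).den := Finset.dvd_prod_of_mem _ (Finset.mem_univ i)
  choose k hk using hdvd
  have hpos : 0 < ∏ j, (q j).den := Finset.prod_pos fun j _ => (q j).den_pos
  refine ⟨_, fun i => (q i).num * k i, hpos, fun i => ?_⟩
  have hk0 : (k i : ℝ) ≠ 0 := by
    have : k i ≠ 0 := by rintro h0; rw [hk i, h0, mul_zero] at hpos; exact hpos.false
    exact_mod_cast this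
  rw [hq, Rat.cast_def, hk i]
  push_cast
  rw [mul_div_mul_right _ _ hk0]

theorem exists_odd_coord_of_norm_eq_one {x : EuclideanSpace ℝ ι} (hx : ‖x‖ = 1)
    (hq : ∀ i, ∃ q : ℚ, x i = q) :
    ∃ (d : ℤ) (m : ι → ℤ), d ≠ 0 ∧ (∀ i, x i = m i / d) ∧ ∃ i, Odd (m i) := by
  obtain ⟨d, m, hd, hxm⟩ := exists_common_denom hq
  induction d using Nat.strong_induction_on generalizing m with
  | _ d ih =>
  by_cases hodd : ∃ i, Odd (m i)
  · exact ⟨d, m, by positivity, by simpa using hxm, hodd⟩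
  push Not at hodd
  simp only [Int.not_odd_iff_even, even_iff_two_dvd] at hodd
  choose k hk using hodd
  have hd2 : 2 ∣ d := by
    have hsum := sum_sq_eq_sq_of_norm_eq_one hx (d := d) (by positivity) (by simpa using hxm)
    have : (2 : ℤ) ∣ d ^ 2 :=
      hsum ▸ Finset.dvd_sum fun i _ => (hk i ▸ dvd_mul_right 2 (k i)).pow two_ne_zero
    exact_mod_cast Int.prime_two.dvd_of_dvd_pow this
  obtain ⟨e, rfl⟩ := hd2
  refine ih e (by omega) k (by omega) fun i => ?_
  rw [hxm i, hk i]
  push_cast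
  exact mul_div_mul_left _ _ two_ne_zero

end EuclideanSpace

theorem inner_ne_zero_of_odd_of_odd {x y : EuclideanSpace ℝ (Fin 3)} {d e : ℤ} {m n : Fin 3 → ℤ}
    (hx : ‖x‖ = 1) (hd : d ≠ 0) (he : e ≠ 0)
    (hxm : ∀ i, x i = m i / d) (hyn : ∀ i, y i = n i / e) {i : Fin 3}
    (hmi : Odd (m i)) (hni : Odd (n i)) : ⟪x, y⟫ ≠ 0 := by
  have hm := sum_sq_eq_sq_of_norm_eq_one hx hd hxm
  have hodd : Odd (∑ j, m j * n j) :=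
    odd_sum_mul_of_odd hmi hni fun j hj => even_of_sum_sq_eq_sq_of_odd hm hmi hj
  rw [inner_eq_sum_mul_div hxm hyn]
  exact div_ne_zero (Int.cast_ne_zero.mpr fun h0 => by simp [h0] at hodd) (by positivity)

/-- Rational unit vectors of the same colour (colour given by which of the
reduced integer coordinates is odd) are never orthogonal; consequently the
red/white/black colouring is a proper 3-colouring of the orthogonality graph
on the rational points of the unit sphere in `ℝ³`. -/
theorem same_colour_not_orthogonal :
    (∀ (u v : EuclideanSpace ℝ (Fin 3)) (a b c d a' b' c' d' : ℤ),
      ‖u‖ = 1 → ‖v‖ = 1 → 0 < d → 0 < d' →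
      Int.gcd (Int.gcd a b : ℤ) c = 1 → Int.gcd (Int.gcd a' b' : ℤ) c' = 1 →
      u 0 = (a : ℝ) / (d : ℝ) → u 1 = (b : ℝ) / (d : ℝ) → u 2 = (c : ℝ) / (d : ℝ) →
      v 0 = (a' : ℝ) / (d' : ℝ) → v 1 = (b' : ℝ) / (d' : ℝ) → v 2 = (c' : ℝ) / (d' : ℝ) →
      ((Odd a ∧ Odd a') ∨ (Odd b ∧ Odd b') ∨ (Odd c ∧ Odd c')) →
      ⟪u, v⟫ ≠ 0) ∧
    ∃ col : {x : EuclideanSpace ℝ (Fin 3) // ‖x‖ = 1 ∧ ∀ i, ∃ q : ℚ, x i = (q : ℝ)} → Fin 3,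
      ∀ u v : {x : EuclideanSpace ℝ (Fin 3) // ‖x‖ = 1 ∧ ∀ i, ∃ q : ℚ, x i = (q : ℝ)},
        ⟪(u : EuclideanSpace ℝ (Fin 3)), (v : EuclideanSpace ℝ (Fin 3))⟫ = 0 →
          col u ≠ col v := by
  constructor
  · intro u v a b c d a' b' c' d' hu _ hd hd' _ _ hu0 hu1 hu2 hv0 hv1 hv2 hodd
    have hum : ∀ i, u i = (![a, b, c] i : ℝ) / d := by intro i; fin_cases i <;> simpa
    have hvm : ∀ i, v i = (![a', b', c'] i : ℝ) / d' := by intro i; fin_cases i <;> simpa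
    rcases hodd with ⟨h, h'⟩ | ⟨h, h'⟩ | ⟨h, h'⟩
    · exact inner_ne_zero_of_odd_of_odd hu hd.ne' hd'.ne' hum hvm (i := 0) h h'
    · exact inner_ne_zero_of_odd_of_odd hu hd.ne' hd'.ne' hum hvm (i := 1) h h'
    · exact inner_ne_zero_of_odd_of_odd hu hd.ne' hd'.ne' hum hvm (i := 2) h h'
  · choose d m hd hm col hcol using fun u : {x : EuclideanSpace ℝ (Fin 3) // ‖x‖ = 1 ∧
      ∀ i, ∃ q : ℚ, x i = (q : ℝ)} => exists_odd_coord_of_norm_eq_one u.2.1 u.2.2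
    refine ⟨col, fun u v huv hcol_eq => ?_⟩
    exact inner_ne_zero_of_odd_of_odd u.2.1 (hd u) (hd v) (hm u) (hm v) (hcol u)
      (hcol_eq ▸ hcol v) huv
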